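/- arXiv:2409.07797 — 2 statements merged into one kernel-verified Lean document; each statement's English description precedes it below -/
import Mathlib

section
/- Boundedness of the scaled residual after QNMF shrinkage (the Lagrange multiplier bound of Algorithm 1): let λ > 0, β > 0, α > 0, let W be an m×n quaternion matrix with decomposition W = U * D(σ) * Vᴴ where U, V are unitary quaternion matrices and σ ∈ ℝ^M (M = min(m,n)) satisfies σ₁ ≥ … ≥ σ_M ≥ 0, and let Z = U * D(S_{λ/β,α}(σ)) * Vᴴ, where S_{λ/β,α} is the QNMF shrinkage with threshold λ/β. Then ‖β·(W − Z)‖_F ≤ λ·√M. -/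
open Matrix BigOperators Filter

noncomputable section

abbrev Quat := Quaternion ℝ

def IsQUnitary {k : ℕ} (U : Matrix (Fin k) (Fin k) Quat) : Prop :=
  Uᴴ * U = 1 ∧ U * Uᴴ = 1

def Dmat {m n : ℕ} (s : Fin (min m n) → ℝ) : Matrix (Fin m) (Fin n) Quat :=
  fun i j =>
    if h : (i : ℕ) = (j : ℕ) then
      ((s ⟨(i : ℕ), by have h1 := i.isLt; have h2 := j.isLt; omega⟩ : ℝ) : Quat)
    else 0

def frob {m n : ℕ} (A : Matrix (Fin m) (Fin n) Quat) : ℝ :=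
  Real.sqrt (∑ i, ∑ j, ‖A i j‖ ^ 2)

def Sshrink {M : ℕ} (lam alph : ℝ) (σ : Fin M → ℝ) : Fin M → ℝ :=
  let z : Fin M → ℝ := fun i => if lam < σ i then σ i - lam / 2 else 0
  let nz : ℝ := Real.sqrt (∑ i, z i ^ 2)
  if nz = 0 then fun _ => 0
  else
    let K : ℝ := 1 + alph * lam / (2 * nz)
    fun i =>
      if K * lam / (2 * (K - 1)) < σ i then σ i
      else if lam < σ i then K * (σ i - lam / 2)
      else 0

open Classical in
def softQ (t : ℝ) (q : Quat) : Quat :=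
  if q = 0 then 0 else (max (‖q‖ - t) 0 / ‖q‖) • q

def qinner {m n : ℕ} (P Q : Matrix (Fin m) (Fin n) Quat) : ℝ :=
  ∑ i, ∑ j, (star (P i j) * Q i j).re

/-! Multiplying by unitary matrices on both sides preserves the Frobenius norm (the real part of
the trace is cyclic even over ℍ), so `β • (W - Z)` has the norm of the diagonal matrix
`β • D(σ - S(σ))`. With `t = λ/β`, the shrinkage changes each `σᵢ` by at most `t`: it keeps
`σᵢ`, or kills `σᵢ ≤ t`, or, for `t < σᵢ ≤ Kt/(2(K-1))` with `K > 1`, moves it by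
`Kt/2 - (K-1)σᵢ ∈ [0, t/2)`. Hence every diagonal entry has modulus at most `λ`. -/

open scoped Quaternion

theorem Quaternion.re_mul_comm {R : Type*} [CommRing R] (a b : ℍ[R]) :
    (a * b).re = (b * a).re := by
  simp only [Quaternion.re_mul]; ring

theorem Quaternion.re_sum {R ι : Type*} [CommRing R] (s : Finset ι) (f : ι → ℍ[R]) :
    (∑ i ∈ s, f i).re = ∑ i ∈ s, (f i).re :=
  map_sum (QuaternionAlgebra.reₗ (R := R) _ _ _) f s

theorem Matrix.re_trace_mul_comm {R : Type*} [CommRing R] {l p : Type*} [Fintype l] [Fintype p]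
    (A : Matrix l p ℍ[R]) (B : Matrix p l ℍ[R]) : (A * B).trace.re = (B * A).trace.re := by
  simp only [Matrix.trace, Matrix.diag, Matrix.mul_apply, Quaternion.re_sum]
  rw [Finset.sum_comm]
  simp only [Quaternion.re_mul_comm]

theorem frob_sq_eq_re_trace {m n : ℕ} (A : Matrix (Fin m) (Fin n) Quat) :
    frob A ^ 2 = (Aᴴ * A).trace.re := by
  rw [frob, Real.sq_sqrt (by positivity), Finset.sum_comm]
  simp only [Matrix.trace, Matrix.diag, Matrix.mul_apply, Matrix.conjTranspose_apply,
    Quaternion.re_sum, Quaternion.star_mul_self, Quaternion.re_coe,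
    Quaternion.normSq_eq_norm_mul_self, sq]

theorem frob_mul_mul_conjTranspose {m n : ℕ} {U : Matrix (Fin m) (Fin m) Quat}
    {V : Matrix (Fin n) (Fin n) Quat} (hU : Uᴴ * U = 1) (hV : Vᴴ * V = 1)
    (A : Matrix (Fin m) (Fin n) Quat) : frob (U * A * Vᴴ) = frob A := by
  have hsq : frob (U * A * Vᴴ) ^ 2 = frob A ^ 2 := by
    have : (U * A * Vᴴ)ᴴ * (U * A * Vᴴ) = V * (Aᴴ * A * Vᴴ) := by
      simp only [Matrix.conjTranspose_mul, Matrix.conjTranspose_conjTranspose, Matrix.mul_assoc]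
      rw [← Matrix.mul_assoc Uᴴ, hU, Matrix.one_mul]
    rw [frob_sq_eq_re_trace, frob_sq_eq_re_trace, this, Matrix.re_trace_mul_comm,
      Matrix.mul_assoc, hV, Matrix.mul_one]
  exact (pow_left_inj₀ (Real.sqrt_nonneg _) (Real.sqrt_nonneg _) two_ne_zero).1 hsq

theorem Dmat_sub {m n : ℕ} (a b : Fin (min m n) → ℝ) :
    Dmat (m := m) (n := n) (a - b) = Dmat a - Dmat b := by
  ext i j : 1
  by_cases h : (i : ℕ) = j <;> simp [Dmat, h, Quaternion.coe_sub]

theorem Dmat_smul {m n : ℕ} (c : ℝ) (a : Fin (min m n) → ℝ) :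
    Dmat (m := m) (n := n) (c • a) = c • Dmat a := by
  ext i j : 1
  by_cases h : (i : ℕ) = j <;> simp [Dmat, h, Quaternion.smul_coe]

theorem frob_Dmat {m n : ℕ} (s : Fin (min m n) → ℝ) :
    frob (Dmat (m := m) (n := n) s) = Real.sqrt (∑ k, s k ^ 2) := by
  rw [frob, ← Fintype.sum_prod_type']
  congr 1
  symm
  refine Finset.sum_of_injOn (fun k => ((⟨k, k.2.trans_le (min_le_left m n)⟩ : Fin m),
    (⟨k, k.2.trans_le (min_le_right m n)⟩ : Fin n))) ?_ (by simp) ?_ ?_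
  · intro k _ l _ hkl
    exact Fin.ext (congrArg (fun p => (p.1 : ℕ)) hkl)
  · rintro ⟨i, j⟩ - hij
    by_cases h : (i : ℕ) = j
    · exact absurd ⟨⟨i, lt_min i.2 (h ▸ j.2)⟩, by simp, by ext <;> simp [h]⟩ hij
    · simp [Dmat, h]
  · intro k _
    simp [Dmat, Quaternion.norm_coe]

theorem frob_Dmat_le {m n : ℕ} {c : ℝ} {s : Fin (min m n) → ℝ} (hs : ∀ k, |s k| ≤ c) :
    frob (Dmat (m := m) (n := n) s) ≤ c * Real.sqrt (min m n) := by
  rcases (min m n).eq_zero_or_pos with hM | hM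
  · have : IsEmpty (Fin (min m n)) := by rw [hM]; infer_instance
    simp [frob_Dmat, ← Nat.cast_min, hM]
  have hc : 0 ≤ c := (abs_nonneg _).trans (hs ⟨0, hM⟩)
  rw [frob_Dmat]
  calc Real.sqrt (∑ k, s k ^ 2) ≤ Real.sqrt (∑ _k : Fin (min m n), c ^ 2) :=
        Real.sqrt_le_sqrt (Finset.sum_le_sum fun k _ => sq_le_sq.2 ((hs k).trans (le_abs_self c)))
    _ = c * Real.sqrt (min m n) := by
        rw [Finset.sum_const, Finset.card_univ, Fintype.card_fin, nsmul_eq_mul,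
          Real.sqrt_mul (Nat.cast_nonneg _), Real.sqrt_sq hc, mul_comm, Nat.cast_min]

theorem sub_mul_sub_half_mem_Icc {t K x : ℝ} (ht : 0 < t) (hK : 1 < K) (hx : t < x)
    (hxK : x ≤ K * t / (2 * (K - 1))) : x - K * (x - t / 2) ∈ Set.Icc 0 t := by
  rw [le_div_iff₀ (by linarith)] at hxK
  constructor <;> nlinarith

theorem sub_Sshrink_mem_Icc {M : ℕ} {t α : ℝ} (ht : 0 < t) (hα : 0 < α) {σ : Fin M → ℝ}
    (hσ : ∀ i, 0 ≤ σ i) (i : Fin M) : σ i - Sshrink t α σ i ∈ Set.Icc 0 t := by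
  set z : Fin M → ℝ := fun j => if t < σ j then σ j - t / 2 else 0
  have hsmall : σ i ≤ t → σ i - 0 ∈ Set.Icc 0 t := fun h => by simpa using ⟨hσ i, h⟩
  simp only [Sshrink, ite_apply]
  split_ifs with hz hbig hmid
  · refine hsmall (not_lt.1 fun hi => ?_)
    have hzi : z i ^ 2 = 0 := (Finset.sum_eq_zero_iff_of_nonneg fun j _ => sq_nonneg (z j)).1
      ((Real.sqrt_eq_zero (by positivity)).1 hz) i (Finset.mem_univ i)
    simp only [z, if_pos hi, pow_eq_zero_iff two_ne_zero] at hzi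
    linarith
  · simp [ht.le]
  · have hK : 0 < α * t / (2 * Real.sqrt (∑ j, z j ^ 2)) :=
      div_pos (mul_pos hα ht) (mul_pos two_pos ((Real.sqrt_nonneg _).lt_of_ne' hz))
    exact sub_mul_sub_half_mem_Icc ht (lt_add_of_pos_right 1 hK) hmid (not_lt.1 hbig)
  · exact hsmall (not_lt.1 hmid)

theorem qnmf_multiplier_bound_general (m n : ℕ) (lam bet alph : ℝ)
    (hlam : 0 < lam) (hbet : 0 < bet) (halph : 0 < alph)
    (W : Matrix (Fin m) (Fin n) Quat)
    (U : Matrix (Fin m) (Fin m) Quat) (V : Matrix (Fin n) (Fin n) Quat)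
    (σ : Fin (min m n) → ℝ)
    (hU : IsQUnitary U) (hV : IsQUnitary V)
    (hnn : ∀ i, 0 ≤ σ i)
    (hW : W = U * Dmat σ * Vᴴ)
    (Z : Matrix (Fin m) (Fin n) Quat)
    (hZ : Z = U * Dmat (Sshrink (lam / bet) alph σ) * Vᴴ) :
    frob (bet • (W - Z)) ≤ lam * Real.sqrt (min m n) := by
  set S := Sshrink (lam / bet) alph σ
  have hres : bet • (W - Z) = U * Dmat (bet • (σ - S)) * Vᴴ := by
    rw [hW, hZ, ← Matrix.sub_mul, ← Matrix.mul_sub, ← Dmat_sub, Dmat_smul, Matrix.mul_smul,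
      Matrix.smul_mul]
  rw [hres, frob_mul_mul_conjTranspose hU.1 hV.1]
  refine frob_Dmat_le fun k => ?_
  obtain ⟨hS0, hSt⟩ := sub_Sshrink_mem_Icc (div_pos hlam hbet) halph hnn k
  calc |bet * (σ k - S k)| = bet * (σ k - S k) := abs_of_nonneg (mul_nonneg hbet.le hS0)
    _ ≤ bet * (lam / bet) := mul_le_mul_of_nonneg_left hSt hbet.le
    _ = lam := mul_div_cancel₀ lam hbet.ne'

theorem qnmf_multiplier_bound (m n : ℕ) (lam bet alph : ℝ)
    (hlam : 0 < lam) (hbet : 0 < bet) (halph : 0 < alph)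
    (W : Matrix (Fin m) (Fin n) Quat)
    (U : Matrix (Fin m) (Fin m) Quat) (V : Matrix (Fin n) (Fin n) Quat)
    (σ : Fin (min m n) → ℝ)
    (hU : IsQUnitary U) (hV : IsQUnitary V)
    (hmono : Antitone σ) (hnn : ∀ i, 0 ≤ σ i)
    (hW : W = U * Dmat σ * Vᴴ)
    (Z : Matrix (Fin m) (Fin n) Quat)
    (hZ : Z = U * Dmat (Sshrink (lam / bet) alph σ) * Vᴴ) :
    frob (bet • (W - Z)) ≤ lam * Real.sqrt (min m n) :=
  qnmf_multiplier_bound_general m n lam bet alph hlam hbet halph W U V σ hU hV hnn hW Z hZ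
end
end

section
/- Invertibility of the regularized quaternion normal matrix: for every m×m quaternion matrix A and real numbers γ ≥ 0 and β > 0, the m×m quaternion matrix γ·Aᴴ*A + β·I is invertible (is a unit in the ring of m×m quaternion matrices). -/
/-!
For `M = γ • (Aᴴ * A) + β • 1` and a row vector `v`, the real part of `(v ᵥ* M) ⬝ᵥ star v` is
`γ ‖A *ᵥ star v‖² + β ‖v‖²`, which vanishes only at `v = 0` when `γ ≥ 0` and `β > 0`. So
`v ↦ v ᵥ* M` is injective, hence surjective because ℍ is a division ring, and over a division ring
a one-sided inverse of a square matrix is two-sided.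
-/

open Matrix BigOperators Filter

noncomputable section

namespace Matrix

variable {n K : Type*} [Fintype n] [DecidableEq n] [DivisionRing K]

theorem isUnit_of_vecMul_injective {A : Matrix n n K} (h : Function.Injective A.vecMul) :
    IsUnit A := by
  have hsurj : Function.Surjective A.vecMul :=
    LinearMap.injective_iff_surjective (f := A.vecMulLinear) |>.mp h
  obtain ⟨B, hBA⟩ := vecMul_surjective_iff_exists_left_inverse.mp hsurj
  exact isUnit_iff_exists_inv'.mpr ⟨B, hBA⟩

end Matrix

namespace Quaternion

variable {ι R : Type*} [CommRing R]

theorem re_sum_s13 (s : Finset ι) (f : ι → ℍ[R]) : (∑ i ∈ s, f i).re = ∑ i ∈ s, (f i).re :=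
  map_sum (QuaternionAlgebra.reₗ (-1) 0 (-1)) f s

variable [Fintype ι]

theorem re_star_dotProduct_self (v : ι → ℍ[R]) : (star v ⬝ᵥ v).re = ∑ i, normSq (v i) := by
  simp [dotProduct, star_mul_self, re_sum_s13]

theorem re_dotProduct_self_star (v : ι → ℍ[R]) : (v ⬝ᵥ star v).re = ∑ i, normSq (v i) := by
  simp [dotProduct, self_mul_star, re_sum_s13]

variable [DecidableEq ι]

theorem re_vecMul_smul_conjTranspose_mul_self_add_smul_one_dotProduct_star
    (A : Matrix ι ι ℍ[R]) (γ β : R) (v : ι → ℍ[R]) :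
    (v ᵥ* (γ • (Aᴴ * A) + β • 1) ⬝ᵥ star v).re =
      γ * ∑ i, normSq ((A *ᵥ star v) i) + β * ∑ i, normSq (v i) := by
  rw [vecMul_add, vecMul_smul, vecMul_smul, vecMul_one, ← vecMul_vecMul, vecMul_conjTranspose,
    add_dotProduct, smul_dotProduct, smul_dotProduct, ← dotProduct_mulVec]
  simp only [re_add, re_smul, re_star_dotProduct_self, re_dotProduct_self_star, smul_eq_mul]

theorem vecMul_smul_conjTranspose_mul_self_add_smul_one_injective [LinearOrder R]
    [IsStrictOrderedRing R] (A : Matrix ι ι ℍ[R]) {γ β : R} (hγ : 0 ≤ γ) (hβ : 0 < β) :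
    Function.Injective (γ • (Aᴴ * A) + β • 1).vecMul := by
  refine (injective_iff_map_eq_zero (γ • (Aᴴ * A) + β • 1).vecMulLinear).mpr fun v hv => ?_
  have hform := re_vecMul_smul_conjTranspose_mul_self_add_smul_one_dotProduct_star A γ β v
  simp only [vecMulLinear_apply] at hv
  simp only [hv, zero_dotProduct, re_zero] at hform
  have hAv : 0 ≤ ∑ i, normSq ((A *ᵥ star v) i) := Finset.sum_nonneg fun _ _ => normSq_nonneg
  have hv_sq : (fun i => normSq (v i)) = 0 := by
    refine (Fintype.sum_eq_zero_iff_of_nonneg fun _ => normSq_nonneg).mp ?_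
    nlinarith [Finset.sum_nonneg fun i (_ : i ∈ Finset.univ) => normSq_nonneg (a := v i)]
  funext i
  exact normSq_eq_zero.mp (congrFun hv_sq i)

end Quaternion

theorem regularized_normal_matrix_invertible (m : ℕ)
    (A : Matrix (Fin m) (Fin m) Quat) (gam bet : ℝ)
    (hgam : 0 ≤ gam) (hbet : 0 < bet) :
    IsUnit (gam • (Aᴴ * A) + bet • (1 : Matrix (Fin m) (Fin m) Quat)) :=
  isUnit_of_vecMul_injective
    (Quaternion.vecMul_smul_conjTranspose_mul_self_add_smul_one_injective A hgam hbet)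
end
end
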